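/- arXiv:1706.04304 — 2 statements merged into one kernel-verified Lean document; each statement's English description precedes it below -/
import Mathlib

section
/- Let p* ∈ (0,1] and define g : ℕ × ℕ → ℝ by g(0,m) = 0 for all m, and for 1 ≤ b ≤ m, g(b,m) = b/m + (1/m)·p*·∑_{b'=0}^{b-1} g(b', m-1) + ((m-b)/m)·g(b, m-1) + (b/m)·(1-p*)·g(b-1, m-1). Then g(b,m) = g(b,b) for all b ≤ m. -/
/-! Clearing denominators, `m · g(b,m) = b·g(b,b) + (m - b)·g(b,m-1)` once the columns `b' < b`
are known to be constant from the diagonal on: the terms involving them are then the same as at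
`m = b`, where the coefficient `m - b` of `g(b,m-1)` vanishes. So by induction on `m` the value
`g(b,b)` propagates along column `b`, and the outer induction is on `b`. -/

def SatisfiesRec (pstar : ℝ) (g : ℕ → ℕ → ℝ) : Prop :=
  ∀ b m, 1 ≤ b → b ≤ m →
    g b m = (b : ℝ)/(m : ℝ)
      + (1/(m : ℝ)) * pstar * ∑ b' ∈ Finset.range b, g b' (m-1)
      + (((m : ℝ) - (b : ℝ))/(m : ℝ)) * g b (m-1)
      + ((b : ℝ)/(m : ℝ)) * (1 - pstar) * g (b-1) (m-1)

section Recursion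

variable {pstar : ℝ} {g : ℕ → ℕ → ℝ}

theorem SatisfiesRec.mul_eq (hrec : SatisfiesRec pstar g) {b m : ℕ} (hb : 1 ≤ b)
    (hbm : b ≤ m) :
    (m : ℝ) * g b m = b + pstar * ∑ b' ∈ Finset.range b, g b' (m-1)
      + ((m : ℝ) - b) * g b (m-1) + b * (1 - pstar) * g (b-1) (m-1) := by
  have hm : (m : ℝ) ≠ 0 := by
    norm_cast
    omega
  rw [hrec b m hb hbm]
  field_simp

theorem sum_range_eq_diag {b n : ℕ} (hcol : ∀ b' < b, ∀ m, b' ≤ m → g b' m = g b' b')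
    (hn : b - 1 ≤ n) :
    ∑ b' ∈ Finset.range b, g b' n = ∑ b' ∈ Finset.range b, g b' b' :=
  Finset.sum_congr rfl fun b' hb' => by
    have := Finset.mem_range.mp hb'
    exact hcol b' this n (by omega)

theorem SatisfiesRec.eq_diag_succ (hrec : SatisfiesRec pstar g) {b m : ℕ} (hb : 1 ≤ b)
    (hcol : ∀ b' < b, ∀ m, b' ≤ m → g b' m = g b' b') (hbm : b ≤ m)
    (hm : g b m = g b b) : g b (m + 1) = g b b := by
  have hdiag := hrec.mul_eq hb le_rfl
  have hnext := hrec.mul_eq (m := m + 1) hb (by omega)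
  rw [sum_range_eq_diag hcol le_rfl, hcol (b-1) (by omega) (b-1) le_rfl, sub_self,
    zero_mul, add_zero] at hdiag
  rw [Nat.add_sub_cancel, sum_range_eq_diag hcol (by omega), hm,
    hcol (b-1) (by omega) m (by omega)] at hnext
  have hm1 : ((m + 1 : ℕ) : ℝ) ≠ 0 := by positivity
  apply mul_left_cancel₀ hm1
  push_cast at hnext ⊢
  linear_combination hnext - hdiag

theorem SatisfiesRec.eq_diag (hrec : SatisfiesRec pstar g) (hbase : ∀ m, g 0 m = 0) :
    ∀ b m, b ≤ m → g b m = g b b := by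
  intro b
  induction b using Nat.strong_induction_on with
  | _ b hcol =>
    rcases Nat.eq_zero_or_pos b with rfl | hb
    · intro m _
      rw [hbase, hbase]
    · intro m hbm
      induction m, hbm using Nat.le_induction with
      | base => rfl
      | succ m hbm hm => exact hrec.eq_diag_succ hb hcol hbm hm

end Recursion

theorem stmt_6_general (pstar : ℝ)
    (g : ℕ → ℕ → ℝ)
    (hbase : ∀ m, g 0 m = 0)
    (hrec : ∀ b m, 1 ≤ b → b ≤ m →
      g b m = (b : ℝ)/(m : ℝ)
        + (1/(m : ℝ)) * pstar * ∑ b' ∈ Finset.range b, g b' (m-1)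
        + (((m : ℝ) - (b : ℝ))/(m : ℝ)) * g b (m-1)
        + ((b : ℝ)/(m : ℝ)) * (1 - pstar) * g (b-1) (m-1)) :
    ∀ b m, b ≤ m → g b m = g b b :=
  SatisfiesRec.eq_diag hrec hbase

/-- If g satisfies g(0,m) = 0 and for 1 ≤ b ≤ m the recursion
g(b,m) = b/m + (1/m)·p*·∑_{b'=0}^{b-1} g(b',m-1) + ((m-b)/m)·g(b,m-1)
        + (b/m)·(1-p*)·g(b-1,m-1),
then g(b,m) = g(b,b) for all b ≤ m. -/
theorem stmt_6 (pstar : ℝ) (h0 : 0 < pstar) (h1 : pstar ≤ 1)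
    (g : ℕ → ℕ → ℝ)
    (hbase : ∀ m, g 0 m = 0)
    (hrec : ∀ b m, 1 ≤ b → b ≤ m →
      g b m = (b : ℝ)/(m : ℝ)
        + (1/(m : ℝ)) * pstar * ∑ b' ∈ Finset.range b, g b' (m-1)
        + (((m : ℝ) - (b : ℝ))/(m : ℝ)) * g b (m-1)
        + ((b : ℝ)/(m : ℝ)) * (1 - pstar) * g (b-1) (m-1)) :
    ∀ b m, b ≤ m → g b m = g b b :=
  stmt_6_general pstar g hbase hrec
end

section
/- Let p* ∈ (0,1] and define g(b,b) by g(0,0) = 0 and the recursion g(b,b) = 1 + (p*/b)·∑_{b'=0}^{b-1} g(b',b') + (1-p*)·g(b-1,b-1) for b ≥ 1 (interpreting g(b',b) = g(b',b')). Then g(b,b) = ∑_{k=1}^{b} (1/k)·∑_{j=0}^{k-1} (1-p*)^j. -/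
/-! With `G k = ∑_{j<k} (1-p)^j`, the closed form `S` satisfies `k S k - k S (k-1) = G k` and
`G (k+1) = (1-p) G k + 1`. Multiplying the recursion by `b` and taking differences in `b` turns it into
a first-order relation between these increments, which the two identities verify. As the recursion
determines `a b` from `a 0, …, a (b-1)`, strong induction gives `a = S`. -/

open Finset

noncomputable def geomHarmonic (p : ℝ) (b : ℕ) : ℝ :=
  ∑ k ∈ Icc 1 b, (1 / (k : ℝ)) * ∑ j ∈ range k, (1 - p) ^ j

namespace geomHarmonic

variable (p : ℝ)

@[simp]
lemma zero : geomHarmonic p 0 = 0 := by simp [geomHarmonic]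

lemma succ_mul_eq_mul_add_geom_sum (b : ℕ) :
    ((b : ℝ) + 1) * geomHarmonic p (b + 1) =
      (b + 1) * geomHarmonic p b + ∑ j ∈ range (b + 1), (1 - p) ^ j := by
  rw [geomHarmonic, geomHarmonic, sum_Icc_succ_top (by omega : 1 ≤ b + 1), mul_add]
  push_cast
  field_simp

lemma succ_mul_eq_recursion (b : ℕ) :
    ((b : ℝ) + 1) * geomHarmonic p (b + 1) =
      (b + 1) + p * ∑ b' ∈ range (b + 1), geomHarmonic p b' + (1 - p) * (b + 1) * geomHarmonic p b := by
  induction b with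
  | zero => simpa using succ_mul_eq_mul_add_geom_sum p 0
  | succ b ih =>
    have h₁ := succ_mul_eq_mul_add_geom_sum p b
    have h₂ := succ_mul_eq_mul_add_geom_sum p (b + 1)
    rw [geom_sum_succ] at h₂
    rw [sum_range_succ]
    push_cast at *
    linear_combination ih + h₂ - (1 - p) * h₁

lemma eq_recursion {b : ℕ} (hb : 1 ≤ b) :
    geomHarmonic p b =
      1 + (p / b) * ∑ b' ∈ range b, geomHarmonic p b' + (1 - p) * geomHarmonic p (b - 1) := by
  obtain ⟨m, rfl⟩ := Nat.exists_eq_add_of_le' hb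
  have hm : ((m : ℝ) + 1) ≠ 0 := by positivity
  have h := succ_mul_eq_recursion p m
  simp only [Nat.add_sub_cancel]
  push_cast
  field_simp
  linear_combination h

end geomHarmonic

theorem stmt_7_general (pstar : ℝ)
    (a : ℕ → ℝ) (hbase : a 0 = 0)
    (hrec : ∀ b, 1 ≤ b →
      a b = 1 + (pstar/(b : ℝ)) * ∑ b' ∈ Finset.range b, a b' + (1 - pstar) * a (b-1)) :
    ∀ b, a b = ∑ k ∈ Finset.Icc 1 b, (1/(k : ℝ)) * ∑ j ∈ Finset.range k, (1 - pstar)^j := by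
  suffices ∀ b, a b = geomHarmonic pstar b from this
  intro b
  induction b using Nat.strong_induction_on with
  | _ b ih =>
    rcases Nat.eq_zero_or_pos b with rfl | hb
    · simpa using hbase
    · rw [hrec b hb, geomHarmonic.eq_recursion pstar hb, sum_congr rfl fun b' hb' => ih b' (mem_range.mp hb'),
        ih (b - 1) (by omega)]

/-- If a(0) = 0 and a(b) = 1 + (p*/b)·∑_{b'=0}^{b-1} a(b') + (1-p*)·a(b-1) for b ≥ 1,
then a(b) = ∑_{k=1}^{b} (1/k)·∑_{j=0}^{k-1} (1-p*)^j.  Here a(b) = g(b,b). -/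
theorem stmt_7 (pstar : ℝ) (h0 : 0 < pstar) (h1 : pstar ≤ 1)
    (a : ℕ → ℝ) (hbase : a 0 = 0)
    (hrec : ∀ b, 1 ≤ b →
      a b = 1 + (pstar/(b : ℝ)) * ∑ b' ∈ Finset.range b, a b' + (1 - pstar) * a (b-1)) :
    ∀ b, a b = ∑ k ∈ Finset.Icc 1 b, (1/(k : ℝ)) * ∑ j ∈ Finset.range k, (1 - pstar)^j :=
  stmt_7_general pstar a hbase hrec
end
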